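/- The group with presentation ⟨x₁, x₂, x₃ | x₁x₂ = x₂x₁, (x₂x₃)^n = (x₃x₂)^n, x₁x₂x₃ = x₂x₃x₁, x₂(x₁x₂x₃) = (x₁x₂x₃)x₂, x₃x₁x₂ = x₁x₂x₃⟩ (for any fixed natural number n) is isomorphic to the free abelian group ℤ³. -/

import Mathlib

/-!
The first and fourth relations say that `x₂` commutes with `x₁` and with `x₁x₂x₃`, hence with `x₃`;
the first and third say that `x₁` commutes with `x₂` and with `x₂x₃`, hence with `x₃`.
So the presented group is abelian. Conversely every relator becomes trivial in an abelian group,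
so the normal closure of the relators is the commutator subgroup of the free group and the
presented group is the abelianization of the free group on three letters, i.e. `ℤ³`.
-/

theorem Abelianization.mul_inv_mem_commutator {G : Type*} [Group G] {a b : G}
    (h : Abelianization.of a = Abelianization.of b) : a * b⁻¹ ∈ commutator G := by
  rw [← Abelianization.ker_of, MonoidHom.mem_ker, map_mul, map_inv, h, mul_inv_cancel]

namespace PresentedGroup

variable {α : Type*} {rels : Set (FreeGroup α)}

theorem mul_comm_of_commute_of (h : ∀ i j : α, Commute (of i : PresentedGroup rels) (of j))
    (a b : PresentedGroup rels) : a * b = b * a := by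
  have hle := Subgroup.closure_le_centralizer_centralizer (Set.range (of (rels := rels)))
  rw [closure_range_of] at hle
  exact Set.centralizer_centralizer_comm_of_comm (by rintro _ ⟨i, rfl⟩ _ ⟨j, rfl⟩; exact h i j)
    a (hle (Subgroup.mem_top a)) b (hle (Subgroup.mem_top b))

theorem normalClosure_eq_commutator (hrels : rels ⊆ commutator (FreeGroup α))
    (hcomm : ∀ i j : α, Commute (of i : PresentedGroup rels) (of j)) :
    Subgroup.normalClosure rels = commutator (FreeGroup α) := by
  refine le_antisymm (Subgroup.normalClosure_le_normal hrels) ?_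
  rw [commutator_def, Subgroup.commutator_le]
  intro a _ b _
  rw [← mk_eq_one_iff, map_commutatorElement, commutatorElement_eq_one_iff_mul_comm]
  exact mul_comm_of_commute_of hcomm _ _

def mulEquivAbelianization (hrels : rels ⊆ commutator (FreeGroup α))
    (hcomm : ∀ i j : α, Commute (of i : PresentedGroup rels) (of j)) :
    PresentedGroup rels ≃* Abelianization (FreeGroup α) :=
  QuotientGroup.quotientMulEquivOfEq (normalClosure_eq_commutator hrels hcomm)

end PresentedGroup

noncomputable def Abelianization.freeGroupMulEquivFinsupp (α : Type*) :
    Abelianization (FreeGroup α) ≃* Multiplicative (α →₀ ℤ) :=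
  (MulEquiv.refl _ : Abelianization (FreeGroup α) ≃* Multiplicative (FreeAbelianGroup α)).trans
    (FreeAbelianGroup.equivFinsupp α).toMultiplicative

def finThreeArrowAddEquiv (M : Type*) [AddCommMonoid M] : (Fin 3 → M) ≃+ M × M × M :=
  ((Fin.consLinearEquiv ℕ fun _ => M).symm.trans
    (LinearEquiv.prodCongr (.refl ℕ M) (LinearEquiv.finTwoArrow ℕ M))).toAddEquiv

open FreeGroup in
def torusLinkRels (n : ℕ) : Set (FreeGroup (Fin 3)) :=
  { of 0 * of 1 * (of 1 * of 0)⁻¹,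
    (of 1 * of 2) ^ n * ((of 2 * of 1) ^ n)⁻¹,
    of 0 * of 1 * of 2 * (of 1 * of 2 * of 0)⁻¹,
    of 1 * (of 0 * of 1 * of 2) * (of 0 * of 1 * of 2 * of 1)⁻¹,
    of 2 * of 0 * of 1 * (of 0 * of 1 * of 2)⁻¹ }

theorem torusLinkRels_subset_commutator (n : ℕ) :
    torusLinkRels n ⊆ commutator (FreeGroup (Fin 3)) := by
  simp only [torusLinkRels, Set.insert_subset_iff, Set.singleton_subset_iff]
  refine ⟨?_, ?_, ?_, ?_, ?_⟩ <;> apply Abelianization.mul_inv_mem_commutator <;>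
    simp only [map_mul, map_pow] <;> ac_rfl

open FreeGroup in
theorem commute_of_torusLinkRels (n : ℕ) (i j : Fin 3) :
    Commute (PresentedGroup.of i : PresentedGroup (torusLinkRels n)) (PresentedGroup.of j) := by
  let x : Fin 3 → PresentedGroup (torusLinkRels n) := PresentedGroup.of
  have rel (a b : FreeGroup (Fin 3)) (h : a * b⁻¹ ∈ torusLinkRels n := by simp [torusLinkRels]) :
      PresentedGroup.mk _ a = PresentedGroup.mk _ b :=
    PresentedGroup.mk_eq_mk_of_mul_inv_mem h
  have c01 : Commute (x 0) (x 1) := rel (of 0 * of 1) (of 1 * of 0)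
  have c0_12 : Commute (x 0) (x 1 * x 2) := by
    have h : x 0 * x 1 * x 2 = x 1 * x 2 * x 0 := rel (of 0 * of 1 * of 2) (of 1 * of 2 * of 0)
    rwa [mul_assoc, mul_assoc] at h
  have c1_012 : Commute (x 1) (x 0 * x 1 * x 2) :=
    rel (of 1 * (of 0 * of 1 * of 2)) (of 0 * of 1 * of 2 * of 1)
  have c02 : Commute (x 0) (x 2) := by
    simpa only [inv_mul_cancel_left] using c01.inv_right.mul_right c0_12
  have c12 : Commute (x 1) (x 2) := by
    simpa only [inv_mul_cancel_left] using (c01.symm.mul_right (.refl _)).inv_right.mul_right c1_012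
  fin_cases i <;> fin_cases j
  all_goals first | exact .refl _ | assumption | exact Commute.symm ‹_›

open FreeGroup in
theorem stmt_0 (n : ℕ) :
    Nonempty
      (PresentedGroup
          ({ of 0 * of 1 * (of 1 * of 0)⁻¹,
             (of 1 * of 2) ^ n * ((of 2 * of 1) ^ n)⁻¹,
             of 0 * of 1 * of 2 * (of 1 * of 2 * of 0)⁻¹,
             of 1 * (of 0 * of 1 * of 2) * (of 0 * of 1 * of 2 * of 1)⁻¹,
             of 2 * of 0 * of 1 * (of 0 * of 1 * of 2)⁻¹ } : Set (FreeGroup (Fin 3)))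
        ≃* Multiplicative (ℤ × ℤ × ℤ)) :=
  ⟨(PresentedGroup.mulEquivAbelianization (torusLinkRels_subset_commutator n)
      (commute_of_torusLinkRels n)).trans <|
    (Abelianization.freeGroupMulEquivFinsupp (Fin 3)).trans <|
      AddEquiv.toMultiplicative <|
        (Finsupp.linearEquivFunOnFinite ℤ ℤ (Fin 3)).toAddEquiv.trans (finThreeArrowAddEquiv ℤ)⟩
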